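/- arXiv:2104.09148 — 3 statements merged into one kernel-verified Lean document; each statement's English description precedes it below -/
import Mathlib

section
/- Suppose there exists a coloring c:[ω₁]²→ω₁×ω with finite-to-one fibers such that for every k < ω and infinite pairwise disjoint family 𝒜 ⊆ [ω₁]^k, and every l < ω and uncountable pairwise disjoint family ℬ ⊆ [ω₁]^l, there exists a ∈ 𝒜 such that for every δ < ω₁ there are ι < ω and b ∈ ℬ with {α < β : c(α,β) = (δ,ι)} = a for every β ∈ b. Then for every ℓ∞-coherent partition p:[ω₁]²→ω there exists a coloring d:[ω₁]²→ω₁ such that: for every k < ω and infinite pairwise disjoint family 𝒜 ⊆ [ω₁]^k, and every l < ω and uncountable pairwise disjoint family ℬ ⊆ [ω₁]^l, there exists a ∈ 𝒜 such that for every k×l matrix ⟨τ_{n,m} : n < k, m < l⟩ of functions from ω to ω₁ there exists b ∈ ℬ with a < b such that d(a(n), b(m)) = τ_{n,m}(p(a(n), b(m))) for all n < k and m < l. -/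
noncomputable section

open Cardinal Set Ordinal

/-- The set of countable ordinals, as a type of order type `ω₁`. -/
abbrev Omega1 : Type := (Ordinal.omega 1).ToType

instance : Nonempty Omega1 :=
  Ordinal.nonempty_toType_iff.2
    (Ordinal.omega0_pos.trans Ordinal.omega0_lt_omega_one).ne'

/-- Proposition (M): there is a nonmeager set of reals of cardinality `ℵ₁`. -/
def PropM : Prop := ∃ X : Set ℝ, #X = Cardinal.aleph 1 ∧ ¬ IsMeagre X

/-- The `i`-th element of a finite subset of `ω₁` in increasing order
(junk value if `i` is out of range). -/
def nth (a : Finset Omega1) (i : ℕ) : Omega1 :=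
  (a.sort (· ≤ ·)).getD i (Classical.arbitrary Omega1)

/-- A partition `p : [ω₁]² → ω` is `ℓ∞`-coherent iff for all `β < β' < ω₁` the set of
integer differences `{p(α,β) - p(α,β') : α < β}` is finite. -/
def LinftyCoherent (p : Omega1 → Omega1 → ℕ) : Prop :=
  ∀ β β' : Omega1, β < β' →
    {z : ℤ | ∃ α : Omega1, α < β ∧ z = (p α β : ℤ) - (p α β' : ℤ)}.Finite

/-!
Fix an injection `r` of `ω₁` into the reals `ℕ → Bool` and a map from `ω₁` onto pairs
(finite `N ⊆ ω`, finite table). For `c(α, β) = (δ, ι)`, `d(α, β)` is the entry of the table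
coded by `δ` at the key (rank of `α` in its `c`-fibre below `β`, trace of `r β` on the `N`
coded by `δ`, `p(α, β)`).

Given `𝒜` and `ℬ`, pass to a countable infinite `𝒜₀ ⊆ 𝒜`, bounded by some `β₀`, and to
uncountably many `b ∈ ℬ` above `β₀` that share one type: a finite `N` on which the traces of
the `r (b m)` are a fixed injective `σ`, and finite sets `E m` containing the differences
`p(α, β₀) - p(α, b m)` (`ℓ∞`-coherence). The hypothesis on `c` yields `a ∈ 𝒜₀`. For a matrix
`τ`, only finitely many keys `(n, σ m, p(a n, b m))` can occur, so one `δ` codes `N` and the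
table `(n, σ m, v) ↦ τ n m v`, and the `b` whose fibres for `δ` equal `a` is as required.
-/

open Function Encodable

theorem List.exists_getD_encode_eq {K X : Type*} [Encodable K] (S : Finset K) (f : K → X)
    (x₀ : X) : ∃ L : List X, ∀ y ∈ S, L.getD (encode y) x₀ = f y := by
  refine ⟨(List.range (S.sup encode + 1)).map fun i => ((decode i).map f).getD x₀, ?_⟩
  intro y hy
  have hlt : encode y < S.sup encode + 1 := Nat.lt_succ_of_le (Finset.le_sup hy)
  rw [List.getD_eq_getElem _ _ (by simpa using hlt)]
  simp

theorem Function.Injective.exists_injOn_filter {X ι : Type*} {r : X → ι → Bool}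
    (hr : Injective r) (s : Finset X) : ∃ N : Finset ι, InjOn (fun x => {i ∈ N | r x i}) s := by
  classical
  have hsep : ∀ q ∈ s.offDiag, ∃ i, r q.1 i ≠ r q.2 i := fun q hq =>
    Function.ne_iff.1 (hr.ne (Finset.mem_offDiag.1 hq).2.2)
  choose w hw using hsep
  refine ⟨s.offDiag.attach.image fun q => w q.1 q.2, fun x hx y hy hxy => ?_⟩
  by_contra hne
  have hq : (x, y) ∈ s.offDiag := Finset.mem_offDiag.2 ⟨hx, hy, hne⟩
  have hmem := Finset.ext_iff.1 hxy (w _ hq)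
  simp only [Finset.mem_filter, Finset.mem_image, Finset.mem_attach, true_and] at hmem
  have hN : ∃ q : s.offDiag, w q.1 q.2 = w _ hq := ⟨⟨_, hq⟩, rfl⟩
  exact hw _ hq (Bool.eq_iff_iff.2 (by simpa [hN] using hmem))

theorem Set.exists_not_countable_sep {X C : Type*} [Countable C] {S : Set X}
    (hS : ¬ S.Countable) {P : X → C → Prop} (hP : ∀ x ∈ S, ∃ y, P x y) :
    ∃ y, ¬ {x ∈ S | P x y}.Countable := by
  by_contra! h
  refine hS ((countable_iUnion h).mono fun x hx => ?_)
  obtain ⟨y, hy⟩ := hP x hx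
  exact mem_iUnion.2 ⟨y, hx, hy⟩

theorem Set.Pairwise.countable_setOf_exists_mem {X : Type*} {ℬ : Set (Finset X)}
    (hℬ : ℬ.Pairwise Disjoint) {C : Set X} (hC : C.Countable) :
    {b ∈ ℬ | ∃ x ∈ b, x ∈ C}.Countable := by
  have : {b ∈ ℬ | ∃ x ∈ b, x ∈ C} = ⋃ x ∈ C, {b ∈ ℬ | x ∈ b} := by
    ext b; simp only [mem_ofPred_eq, mem_iUnion, exists_prop]; tauto
  rw [this]
  refine hC.biUnion fun x _ => Subsingleton.countable fun b hb b' hb' => ?_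
  by_contra hne
  exact Finset.disjoint_left.1 (hℬ hb.1 hb'.1 hne) hb.2 hb'.2

def DecodesFiniteTables {P K : Type} (dec : Omega1 → P × (K → Omega1)) : Prop :=
  ∀ (x : P) (S : Finset K) (f : K → Omega1), ∃ δ, (dec δ).1 = x ∧ ∀ y ∈ S, (dec δ).2 y = f y

namespace Omega1

theorem mk_eq : #Omega1 = ℵ₁ := by
  rw [Cardinal.mk_toType, Ordinal.card_omega]

theorem aleph0_le_mk : ℵ₀ ≤ #Omega1 :=
  mk_eq ▸ Cardinal.aleph0_le_aleph 1

instance : Infinite Omega1 :=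
  Cardinal.infinite_iff.2 aleph0_le_mk

theorem countable_Iic (β : Omega1) : (Iic β).Countable := by
  rw [← Iio_insert, countable_insert, ← Cardinal.le_aleph0_iff_set_countable,
    ← Cardinal.lt_aleph_one_iff]
  refine (Cardinal.mk_Iio_lt β ?_).trans_eq mk_eq
  rw [mk_eq, Cardinal.ord_aleph, Ordinal.type_toType]

theorem exists_gt_of_countable {s : Set Omega1} (hs : s.Countable) : ∃ β, ∀ α ∈ s, α < β := by
  refine not_isCofinal_iff.1 fun hcof => ?_
  have := (Order.cof_le hcof).trans (Cardinal.le_aleph0_iff_set_countable.2 hs)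
  rw [Ordinal.cof_toType, Cardinal.cof_omega_one] at this
  exact Cardinal.aleph0_lt_aleph_one.not_ge this

theorem nonempty_embedding_cantor : Nonempty (Omega1 ↪ (ℕ → Bool)) := by
  rw [← Cardinal.le_def, mk_eq]
  simpa using Cardinal.aleph_one_le_continuum

theorem exists_decode_finite_tables (P K : Type) [Countable P] [Nonempty P] [Encodable K] :
    ∃ dec : Omega1 → P × (K → Omega1), DecodesFiniteTables dec := by
  obtain ⟨e, he⟩ : ∃ e : Omega1 → P × List Omega1, Surjective e := by
    have hle : #(P × List Omega1) ≤ #Omega1 := by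
      rw [Cardinal.mk_prod, Cardinal.lift_id, Cardinal.lift_id, Cardinal.mk_list_eq_mk]
      exact Cardinal.mul_le_of_le aleph0_le_mk (Cardinal.mk_le_aleph0.trans aleph0_le_mk) le_rfl
    obtain ⟨ι⟩ := hle
    exact ⟨invFun ι, invFun_surjective ι.injective⟩
  refine ⟨fun δ => ((e δ).1, fun y => (e δ).2.getD (encode y) (Classical.arbitrary _)),
    fun x S f => ?_⟩
  obtain ⟨L, hL⟩ := List.exists_getD_encode_eq S f (Classical.arbitrary Omega1)
  obtain ⟨δ, hδ⟩ := he (x, L)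
  exact ⟨δ, by simp [hδ], fun y hy => by simp only [hδ]; exact hL y hy⟩

end Omega1

theorem nth_eq_orderEmbOfFin {a : Finset Omega1} {k : ℕ} (h : a.card = k) (i : Fin k) :
    nth a i = a.orderEmbOfFin h i := by
  rw [nth, Finset.orderEmbOfFin_apply, List.getD_eq_getElem _ _ (by simp [h])]
  rfl

theorem nth_mem {a : Finset Omega1} {k : ℕ} (h : a.card = k) (i : Fin k) : nth a i ∈ a := by
  simp [nth_eq_orderEmbOfFin h]

theorem nth_injective {a : Finset Omega1} {k : ℕ} (h : a.card = k) :
    Injective fun i : Fin k => nth a i := by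
  simpa [nth_eq_orderEmbOfFin h] using (a.orderEmbOfFin h).injective

theorem ncard_setOf_lt_nth_and_mem {a : Finset Omega1} {k : ℕ} (h : a.card = k) (i : Fin k) :
    {γ | γ < nth a i ∧ γ ∈ a}.ncard = i := by
  have : {γ | γ < nth a i ∧ γ ∈ a} = a.orderEmbOfFin h '' Iio i := by
    ext γ
    constructor
    · rintro ⟨hlt, hγ⟩
      obtain ⟨j, rfl⟩ : γ ∈ range (a.orderEmbOfFin h) := by simpa using hγ
      exact ⟨j, by simpa [nth_eq_orderEmbOfFin h] using hlt, rfl⟩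
    · rintro ⟨j, hj, rfl⟩
      exact ⟨by simpa [nth_eq_orderEmbOfFin h] using hj, by simp⟩
  rw [this, ncard_image_of_injective _ (a.orderEmbOfFin h).injective, ← Finset.coe_Iio,
    ncard_coe_finset, Fin.card_Iio]

theorem not_countable_setOf_forall_gt {ℬ : Set (Finset Omega1)} (hℬ : ¬ ℬ.Countable)
    (hdisj : ℬ.Pairwise Disjoint) (β₀ : Omega1) : ¬ {b ∈ ℬ | ∀ β ∈ b, β₀ < β}.Countable := by
  refine fun h => hℬ ((h.union (hdisj.countable_setOf_exists_mem
    (Omega1.countable_Iic β₀))).mono fun b hb => ?_)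
  by_cases hlt : ∀ β ∈ b, β₀ < β
  · exact Or.inl ⟨hb, hlt⟩
  · push Not at hlt
    obtain ⟨β, hβ, hle⟩ := hlt
    exact Or.inr ⟨hb, β, hβ, hle⟩

def RealizesFibers (c : Omega1 → Omega1 → Omega1 × ℕ) : Prop :=
  ∀ k : ℕ, ∀ 𝒜 : Set (Finset Omega1), 𝒜.Infinite → (∀ a ∈ 𝒜, a.card = k) →
    𝒜.Pairwise Disjoint →
  ∀ l : ℕ, ∀ ℬ : Set (Finset Omega1), ¬ ℬ.Countable → (∀ b ∈ ℬ, b.card = l) →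
    ℬ.Pairwise Disjoint →
  ∃ a ∈ 𝒜, ∀ δ : Omega1, ∃ ι : ℕ, ∃ b ∈ ℬ, ∀ β ∈ b, {α | α < β ∧ c α β = (δ, ι)} = ↑a

def transferColoring (c : Omega1 → Omega1 → Omega1 × ℕ) (p : Omega1 → Omega1 → ℕ)
    (r : Omega1 → ℕ → Bool) (dec : Omega1 → Finset ℕ × (ℕ × Finset ℕ × ℕ → Omega1))
    (α β : Omega1) : Omega1 :=
  (dec (c α β).1).2 ({γ | γ < α ∧ c γ β = c α β}.ncard, {i ∈ (dec (c α β).1).1 | r β i}, p α β)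

def HasType (p : Omega1 → Omega1 → ℕ) (r : Omega1 → ℕ → Bool) (β₀ : Omega1) {l : ℕ}
    (E : Fin l → Finset ℤ) (N : Finset ℕ) (σ : Fin l → Finset ℕ) (b : Finset Omega1) : Prop :=
  ∀ m : Fin l, {i ∈ N | r (nth b m) i} = σ m ∧ ∀ α < β₀, (p α β₀ : ℤ) - p α (nth b m) ∈ E m

section Transfer

variable {c : Omega1 → Omega1 → Omega1 × ℕ} {p : Omega1 → Omega1 → ℕ} {r : Omega1 → ℕ → Bool}
  {dec : Omega1 → Finset ℕ × (ℕ × Finset ℕ × ℕ → Omega1)} {β₀ : Omega1} {k l : ℕ}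

theorem exists_hasType (hp : LinftyCoherent p) (hr : Injective r) {b : Finset Omega1}
    (hb : b.card = l) (hβ₀ : ∀ β ∈ b, β₀ < β) :
    ∃ E N, ∃ σ : Fin l → Finset ℕ, Injective σ ∧ HasType p r β₀ E N σ b := by
  obtain ⟨N, hN⟩ := hr.exists_injOn_filter b
  refine ⟨fun m => (hp β₀ (nth b m) (hβ₀ _ (nth_mem hb m))).toFinset, N,
    fun m => {i ∈ N | r (nth b m) i}, fun m m' h => nth_injective hb ?_,
    fun m => ⟨rfl, fun α hα => ?_⟩⟩
  · exact hN (nth_mem hb m) (nth_mem hb m') h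
  · simpa using ⟨α, hα, rfl⟩

theorem exists_code_realizing (hdec : DecodesFiniteTables dec) {a : Finset Omega1}
    (ha : a.card = k) (haβ₀ : ∀ α ∈ a, α < β₀)
    {E : Fin l → Finset ℤ} {N : Finset ℕ} {σ : Fin l → Finset ℕ} (hσ : Injective σ)
    (τ : Fin k → Fin l → ℕ → Omega1) :
    ∃ δ, ∀ (ι : ℕ) (b : Finset Omega1), b.card = l → HasType p r β₀ E N σ b →
      (∀ β ∈ b, {α | α < β ∧ c α β = (δ, ι)} = ↑a) →
      ∀ (n : Fin k) (m : Fin l),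
        transferColoring c p r dec (nth a n) (nth b m) = τ n m (p (nth a n) (nth b m)) := by
  set key : Fin k × Fin l × ℕ → ℕ × Finset ℕ × ℕ := fun q => (q.1, σ q.2.1, q.2.2)
  have hkey : Injective key := by
    rintro ⟨n, m, v⟩ ⟨n', m', v'⟩ h
    simp only [key, Prod.mk.injEq] at h
    obtain ⟨h₁, h₂, rfl⟩ := h
    rw [Fin.ext h₁, hσ h₂]
  -- by coherence, only finitely many keys can occur
  set S := Finset.univ.biUnion fun nm : Fin k × Fin l =>
    (E nm.2).image fun z => key (nm.1, nm.2, ((p (nth a nm.1) β₀ : ℤ) - z).toNat)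
  obtain ⟨δ, hN, htable⟩ :=
    hdec N S (extend key (fun q => τ q.1 q.2.1 q.2.2) fun _ => Classical.arbitrary _)
  refine ⟨δ, fun ι b hb htype hfib n m => ?_⟩
  obtain ⟨htrace, hdiff⟩ := htype m
  set α := nth a n
  set β := nth b m
  obtain ⟨hαβ, hcαβ⟩ : α ∈ {α | α < β ∧ c α β = (δ, ι)} :=
    hfib β (nth_mem hb m) ▸ nth_mem ha n
  have hrank : {γ | γ < α ∧ c γ β = (δ, ι)}.ncard = n := by
    rw [← ncard_setOf_lt_nth_and_mem ha n]
    congr 1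
    ext γ
    refine and_congr_right fun hγ => ?_
    rw [← Finset.mem_coe, ← hfib β (nth_mem hb m)]
    exact ⟨fun h => ⟨hγ.trans hαβ, h⟩, And.right⟩
  have hmem : key (n, m, p α β) ∈ S := by
    refine Finset.mem_biUnion.2 ⟨(n, m), Finset.mem_univ _,
      Finset.mem_image.2 ⟨_, hdiff α (haβ₀ α (nth_mem ha n)), ?_⟩⟩
    simp [α]
  simp only [transferColoring, hcαβ, hN, hrank, htrace]
  rw [show ((n : ℕ), σ m, p α β) = key (n, m, p α β) from rfl, htable _ hmem, hkey.extend_apply]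

theorem exists_realizing_transferColoring (hc : RealizesFibers c) (hp : LinftyCoherent p)
    (hr : Injective r) (hdec : DecodesFiniteTables dec) {𝒜 : Set (Finset Omega1)}
    (h𝒜 : 𝒜.Infinite) (h𝒜card : ∀ a ∈ 𝒜, a.card = k) (h𝒜disj : 𝒜.Pairwise Disjoint)
    {ℬ : Set (Finset Omega1)} (hℬ : ¬ ℬ.Countable) (hℬcard : ∀ b ∈ ℬ, b.card = l)
    (hℬdisj : ℬ.Pairwise Disjoint) :
    ∃ a ∈ 𝒜, ∀ τ : Fin k → Fin l → ℕ → Omega1, ∃ b ∈ ℬ, (∀ α ∈ a, ∀ β ∈ b, α < β) ∧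
      ∀ (n : Fin k) (m : Fin l),
        transferColoring c p r dec (nth a n) (nth b m) = τ n m (p (nth a n) (nth b m)) := by
  obtain ⟨𝒜₀, h𝒜₀, h𝒜₀c, h𝒜₀i⟩ := h𝒜.exists_subset_countable_infinite
  obtain ⟨β₀, hβ₀⟩ :=
    Omega1.exists_gt_of_countable (h𝒜₀c.biUnion fun a _ => a.finite_toSet.countable)
  obtain ⟨⟨E, N, σ⟩, hℬ₀⟩ := Set.exists_not_countable_sep
    (P := fun b (y : (Fin l → Finset ℤ) × Finset ℕ × (Fin l → Finset ℕ)) =>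
      Injective y.2.2 ∧ HasType p r β₀ y.1 y.2.1 y.2.2 b)
    (not_countable_setOf_forall_gt hℬ hℬdisj β₀)
    fun b hb => by
      obtain ⟨E, N, σ, h⟩ := exists_hasType hp hr (hℬcard b hb.1) hb.2
      exact ⟨(E, N, σ), h⟩
  obtain ⟨-, -, hσ, -⟩ : {b | (b ∈ ℬ ∧ ∀ β ∈ b, β₀ < β) ∧
      Injective σ ∧ HasType p r β₀ E N σ b}.Nonempty :=
    nonempty_iff_ne_empty.2 fun h => hℬ₀ (h ▸ countable_empty)
  obtain ⟨a, ha, hfib⟩ := hc k 𝒜₀ h𝒜₀i (fun a ha => h𝒜card a (h𝒜₀ ha)) (h𝒜disj.mono h𝒜₀)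
    l _ hℬ₀ (fun b hb => hℬcard b hb.1.1) (hℬdisj.mono fun b hb => hb.1.1)
  refine ⟨a, h𝒜₀ ha, fun τ => ?_⟩
  obtain ⟨δ, hδ⟩ := exists_code_realizing hdec (h𝒜card a (h𝒜₀ ha))
    (fun α hα => hβ₀ α (mem_biUnion ha hα)) hσ τ
  obtain ⟨ι, b, hb, hbfib⟩ := hfib δ
  refine ⟨b, hb.1.1, fun α hα β hβ => ?_, hδ ι b (hℬcard b hb.1.1) hb.2.2 hbfib⟩
  exact (hbfib β hβ ▸ hα : α ∈ {α | α < β ∧ c α β = (δ, ι)}).1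

end Transfer

/-- From a coloring `c` as in statement 3, for every `ℓ∞`-coherent partition
`p : [ω₁]² → ω` there is a coloring `d : [ω₁]² → ω₁` such that for every `k` and
infinite pairwise disjoint `𝒜 ⊆ [ω₁]^k`, and every `l` and uncountable pairwise
disjoint `ℬ ⊆ [ω₁]^l`, there is `a ∈ 𝒜` such that for every matrix
`⟨τ_{n,m} : n < k, m < l⟩` of functions from `ω` to `ω₁` there is `b ∈ ℬ` with `a < b`
and `d(a(n), b(m)) = τ_{n,m}(p(a(n), b(m)))` for all `n < k`, `m < l`. -/
theorem statement4
    (h : ∃ c : Omega1 → Omega1 → Omega1 × ℕ,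
      (∀ β : Omega1, ∀ t : Omega1 × ℕ, {α : Omega1 | α < β ∧ c α β = t}.Finite) ∧
      ∀ k : ℕ, ∀ 𝒜 : Set (Finset Omega1), 𝒜.Infinite → (∀ a ∈ 𝒜, a.card = k) →
        (∀ a ∈ 𝒜, ∀ a' ∈ 𝒜, a ≠ a' → Disjoint a a') →
      ∀ l : ℕ, ∀ ℬ : Set (Finset Omega1), ¬ ℬ.Countable → (∀ b ∈ ℬ, b.card = l) →
        (∀ b ∈ ℬ, ∀ b' ∈ ℬ, b ≠ b' → Disjoint b b') →
      ∃ a ∈ 𝒜, ∀ δ : Omega1, ∃ ι : ℕ, ∃ b ∈ ℬ, ∀ β ∈ b,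
        {α : Omega1 | α < β ∧ c α β = (δ, ι)} = ↑a) :
    ∀ p : Omega1 → Omega1 → ℕ, LinftyCoherent p →
      ∃ d : Omega1 → Omega1 → Omega1,
        ∀ k : ℕ, ∀ 𝒜 : Set (Finset Omega1), 𝒜.Infinite → (∀ a ∈ 𝒜, a.card = k) →
          (∀ a ∈ 𝒜, ∀ a' ∈ 𝒜, a ≠ a' → Disjoint a a') →
        ∀ l : ℕ, ∀ ℬ : Set (Finset Omega1), ¬ ℬ.Countable → (∀ b ∈ ℬ, b.card = l) →
          (∀ b ∈ ℬ, ∀ b' ∈ ℬ, b ≠ b' → Disjoint b b') →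
        ∃ a ∈ 𝒜, ∀ τ : Fin k → Fin l → ℕ → Omega1, ∃ b ∈ ℬ,
          (∀ α ∈ a, ∀ β ∈ b, α < β) ∧
          ∀ (n : Fin k) (m : Fin l),
            d (nth a n) (nth b m) = τ n m (p (nth a n) (nth b m)) := by
  intro p hp
  obtain ⟨c, -, hc⟩ := h
  obtain ⟨r⟩ := Omega1.nonempty_embedding_cantor
  obtain ⟨dec, hdec⟩ := Omega1.exists_decode_finite_tables (Finset ℕ) (ℕ × Finset ℕ × ℕ)
  exact ⟨transferColoring c p r dec, fun k 𝒜 h𝒜 h𝒜card h𝒜disj l ℬ hℬ hℬcard hℬdisj =>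
    exists_realizing_transferColoring hc hp r.injective hdec h𝒜 h𝒜card h𝒜disj hℬ hℬcard hℬdisj⟩
end
end

section
/- Suppose that for every ℓ∞-coherent partition p:[ω₁]²→ω there exists a coloring d:[ω₁]²→ω₁ such that for every k < ω and infinite pairwise disjoint family 𝒜 ⊆ [ω₁]^k, and every l < ω and uncountable pairwise disjoint family ℬ ⊆ [ω₁]^l, there exists a ∈ 𝒜 such that for every k×l matrix ⟨τ_{n,m}⟩ of functions from ω to ω₁ there exists b ∈ ℬ with a < b such that d(a(n), b(m)) = τ_{n,m}(p(a(n), b(m))) for all n < k, m < l. Then there exists a coloring e:[ω₁]²→ω such that for every infinite A ⊆ ω₁ and every uncountable B ⊆ ω₁ there is α ∈ A such that {e(α,β) : β ∈ B, β > α} = ω. -/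
/-!
Apply the hypothesis to the constant partition `0`, which is trivially `ℓ∞`-coherent, and to the
families of singletons of `A` and of `B` (so `k = l = 1`). The resulting `α ∈ A` has the property
that `d(α, β)` takes every value of `ω₁` for suitable `β ∈ B` above `α`; composing `d` with a left
inverse of an injection `ℕ → ω₁` gives `e`.
-/

noncomputable section

open Cardinal Set Ordinal

/-- The conclusion of statement 4 for a partition `p` and a coloring `d`. -/
def IsStrongColoring (p : Omega1 → Omega1 → ℕ) (d : Omega1 → Omega1 → Omega1) : Prop :=
  ∀ k : ℕ, ∀ 𝒜 : Set (Finset Omega1), 𝒜.Infinite → (∀ a ∈ 𝒜, a.card = k) → 𝒜.Pairwise Disjoint →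
  ∀ l : ℕ, ∀ ℬ : Set (Finset Omega1), ¬ ℬ.Countable → (∀ b ∈ ℬ, b.card = l) → ℬ.Pairwise Disjoint →
  ∃ a ∈ 𝒜, ∀ τ : Fin k → Fin l → ℕ → Omega1, ∃ b ∈ ℬ,
    (∀ α ∈ a, ∀ β ∈ b, α < β) ∧
    ∀ (n : Fin k) (m : Fin l), d (nth a n) (nth b m) = τ n m (p (nth a n) (nth b m))

instance : Infinite Omega1 := by
  rw [Cardinal.infinite_iff, Omega1, Cardinal.mk_toType, Ordinal.card_omega]
  exact Cardinal.aleph0_le_aleph 1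

lemma nth_singleton (α : Omega1) : nth {α} 0 = α := by
  simp [nth, Finset.sort_singleton]

lemma linftyCoherent_const (c : ℕ) : LinftyCoherent fun _ _ => c := by
  intro β β' _
  refine (Set.finite_singleton (0 : ℤ)).subset ?_
  rintro z ⟨α, -, rfl⟩
  simp

section Singletons

variable {α : Type*} {S : Set α}

lemma Set.Infinite.image_singleton (hS : S.Infinite) :
    ((fun x => ({x} : Finset α)) '' S).Infinite :=
  hS.image Finset.singleton_injective.injOn

lemma Set.not_countable_image_singleton (hS : ¬ S.Countable) :
    ¬ ((fun x => ({x} : Finset α)) '' S).Countable :=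
  fun h => hS (countable_of_injective_of_countable_image Finset.singleton_injective.injOn h)

lemma Set.pairwise_disjoint_image_singleton (S : Set α) :
    ((fun x => ({x} : Finset α)) '' S).Pairwise Disjoint :=
  (Finset.singleton_injective.injOn.pairwise_image).2
    fun _ _ _ _ hne => Finset.disjoint_singleton.2 hne

end Singletons

lemma IsStrongColoring.exists_forall_exists_eq {p : Omega1 → Omega1 → ℕ}
    {d : Omega1 → Omega1 → Omega1} (hd : IsStrongColoring p d) {A B : Set Omega1}
    (hA : A.Infinite) (hB : ¬ B.Countable) :
    ∃ α ∈ A, ∀ τ : ℕ → Omega1, ∃ β ∈ B, α < β ∧ d α β = τ (p α β) := by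
  obtain ⟨_, ⟨α, hαA, rfl⟩, hα⟩ := hd 1 _ hA.image_singleton (by simp)
    (pairwise_disjoint_image_singleton A) 1 _ (not_countable_image_singleton hB) (by simp)
    (pairwise_disjoint_image_singleton B)
  refine ⟨α, hαA, fun τ => ?_⟩
  obtain ⟨_, ⟨β, hβB, rfl⟩, hαβ, hdβ⟩ := hα fun _ _ => τ
  have hdβ := hdβ 0 0
  simp only [Fin.val_zero, nth_singleton] at hdβ
  exact ⟨β, hβB, hαβ α (Finset.mem_singleton_self α) β (Finset.mem_singleton_self β), hdβ⟩

/-- If for every `ℓ∞`-coherent partition `p` there is a coloring `d` as in statement 4,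
then there is a coloring `e : [ω₁]² → ω` such that for every infinite `A ⊆ ω₁` and
uncountable `B ⊆ ω₁` there is `α ∈ A` with `{e(α,β) : β ∈ B, β > α} = ω`. -/
theorem statement5
    (h : ∀ p : Omega1 → Omega1 → ℕ, LinftyCoherent p →
      ∃ d : Omega1 → Omega1 → Omega1,
        ∀ k : ℕ, ∀ 𝒜 : Set (Finset Omega1), 𝒜.Infinite → (∀ a ∈ 𝒜, a.card = k) →
          (∀ a ∈ 𝒜, ∀ a' ∈ 𝒜, a ≠ a' → Disjoint a a') →
        ∀ l : ℕ, ∀ ℬ : Set (Finset Omega1), ¬ ℬ.Countable → (∀ b ∈ ℬ, b.card = l) →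
          (∀ b ∈ ℬ, ∀ b' ∈ ℬ, b ≠ b' → Disjoint b b') →
        ∃ a ∈ 𝒜, ∀ τ : Fin k → Fin l → ℕ → Omega1, ∃ b ∈ ℬ,
          (∀ α ∈ a, ∀ β ∈ b, α < β) ∧
          ∀ (n : Fin k) (m : Fin l),
            d (nth a n) (nth b m) = τ n m (p (nth a n) (nth b m))) :
    ∃ e : Omega1 → Omega1 → ℕ,
      ∀ A : Set Omega1, A.Infinite → ∀ B : Set Omega1, ¬ B.Countable →
        ∃ α ∈ A, {n : ℕ | ∃ β ∈ B, α < β ∧ e α β = n} = Set.univ := by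
  obtain ⟨d, hd⟩ : ∃ d, IsStrongColoring (fun _ _ => 0) d := h _ (linftyCoherent_const 0)
  let g := Infinite.natEmbedding Omega1
  refine ⟨fun α β => Function.invFun g (d α β), fun A hA B hB => ?_⟩
  obtain ⟨α, hαA, hα⟩ := hd.exists_forall_exists_eq hA hB
  refine ⟨α, hαA, Set.eq_univ_of_forall fun n => ?_⟩
  obtain ⟨β, hβB, hαβ, hdβ⟩ := hα fun _ => g n
  refine ⟨β, hβB, hαβ, ?_⟩
  change Function.invFun g (d α β) = n
  rw [hdβ, Function.leftInverse_invFun g.injective n]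
end
end

section
/- Let p:[ω₁]²→ω be a partition and c:[ω₁]²→ω a coloring. For every β < ω₁, the set D_β := {q ∈ ℚ(p,c) : β ∈ a_q} is dense in ℚ(p,c); that is, for every condition q ∈ ℚ(p,c) there exists a condition q' ∈ ℚ(p,c) with q' ≤ q and β ∈ a_{q'}. Indeed, for all sufficiently large k < ω, the triple q^∧(k,{β}) — obtained from q by adding β to a_q (if β ∉ a_q) and setting f(β) := k, keeping w_q unchanged — is such a condition. -/
noncomputable section

open Cardinal Set Ordinal

/-- A condition of the poset `ℚ(p,c)`: a triple `(a, f, w)` where `a` is a finite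
subset of `ω₁`, `f : a → ω` (modelled as a total function, only its restriction to
`a` is relevant), and `w` is a function from a finite subset `wdom` of `ω × ω` to `ω`
(modelled likewise), such that whenever `α < β` in `a` and `f(α) = f(β)`, we have
`(f(α), p(α,β)) ∈ wdom` and `c(α,β) = w(f(α), p(α,β))`. -/
structure QCond (p c : Omega1 → Omega1 → ℕ) where
  a : Finset Omega1
  f : Omega1 → ℕ
  wdom : Finset (ℕ × ℕ)
  w : ℕ × ℕ → ℕ
  compat : ∀ α ∈ a, ∀ β ∈ a, α < β → f α = f β →
    (f α, p α β) ∈ wdom ∧ c α β = w (f α, p α β)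

/-- The extension order of `ℚ(p,c)`: `q' ≤ q` iff `a_q ⊆ a_{q'}`, `f_{q'}` extends
`f_q`, and `w_{q'}` extends `w_q`. -/
def QLe {p c : Omega1 → Omega1 → ℕ} (q' q : QCond p c) : Prop :=
  q.a ⊆ q'.a ∧ (∀ α ∈ q.a, q'.f α = q.f α) ∧
    q.wdom ⊆ q'.wdom ∧ ∀ x ∈ q.wdom, q'.w x = q.w x


theorem QLe.refl {p c : Omega1 → Omega1 → ℕ} (q : QCond p c) : QLe q q :=
  ⟨subset_rfl, fun _ _ => rfl, subset_rfl, fun _ _ => rfl⟩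

namespace QCond

variable {p c : Omega1 → Omega1 → ℕ}

/-- The condition `q^∧(k,{β})`. A colour `k` not used by `f_q` creates no new pair with equal
colours, so the requirement on `w` is inherited from `q`. -/
def insertFresh (q : QCond p c) (β : Omega1) (hβ : β ∉ q.a) (k : ℕ) (hk : k ∉ q.a.image q.f) :
    QCond p c where
  a := insert β q.a
  f := Function.update q.f β k
  wdom := q.wdom
  w := q.w
  compat := by
    have hf : ∀ δ ∈ q.a, Function.update q.f β k δ = q.f δ := fun δ hδ =>
      Function.update_of_ne (ne_of_mem_of_not_mem hδ hβ) _ _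
    have hfresh : ∀ δ ∈ q.a, q.f δ ≠ k := fun δ hδ h => hk (h ▸ Finset.mem_image_of_mem _ hδ)
    intro α hα γ hγ hlt heq
    rcases Finset.mem_insert.1 hα with rfl | hαa <;> rcases Finset.mem_insert.1 hγ with rfl | hγa
    · exact absurd hlt (lt_irrefl _)
    · simp only [Function.update_self, hf γ hγa] at heq
      exact absurd heq.symm (hfresh γ hγa)
    · simp only [Function.update_self, hf α hαa] at heq
      exact absurd heq (hfresh α hαa)
    · simp only [hf α hαa, hf γ hγa] at heq ⊢
      exact q.compat α hαa γ hγa hlt heq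

theorem insertFresh_qLe (q : QCond p c) (β : Omega1) (hβ : β ∉ q.a) (k : ℕ)
    (hk : k ∉ q.a.image q.f) : QLe (q.insertFresh β hβ k hk) q :=
  ⟨Finset.subset_insert _ _,
    fun _ hα => Function.update_of_ne (ne_of_mem_of_not_mem hα hβ) _ _, subset_rfl,
    fun _ _ => rfl⟩

theorem eventually_exists_insert (q : QCond p c) (β : Omega1) :
    ∀ᶠ k in Filter.atTop, ∃ q' : QCond p c, q'.a = insert β q.a ∧
      q'.f = (if β ∈ q.a then q.f else Function.update q.f β k) ∧
      q'.wdom = q.wdom ∧ q'.w = q.w ∧ QLe q' q ∧ β ∈ q'.a := by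
  by_cases hβ : β ∈ q.a
  · exact Filter.Eventually.of_forall fun _ => ⟨q, (Finset.insert_eq_self.2 hβ).symm,
      (if_pos hβ).symm, rfl, rfl, QLe.refl q, hβ⟩
  · rw [← Nat.cofinite_eq_atTop]
    filter_upwards [(q.a.image q.f).eventually_cofinite_notMem] with k hk
    exact ⟨q.insertFresh β hβ k hk, rfl, (if_neg hβ).symm, rfl, rfl, q.insertFresh_qLe β hβ k hk,
      Finset.mem_insert_self _ _⟩

end QCond

/-- For every `β < ω₁`, the set `D_β = {q ∈ ℚ(p,c) : β ∈ a_q}` is dense: every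
condition `q` has an extension `q'` with `β ∈ a_{q'}`. Indeed, for all sufficiently
large `k < ω`, the triple `q^∧(k,{β})` — obtained from `q` by adding `β` to `a_q`
(if `β ∉ a_q`) and setting `f(β) := k`, keeping `w_q` unchanged — is such a
condition. -/
theorem statement15 (p c : Omega1 → Omega1 → ℕ) (β : Omega1) :
    (∀ q : QCond p c, ∃ q' : QCond p c, QLe q' q ∧ β ∈ q'.a) ∧
    (∀ q : QCond p c, ∀ᶠ k in Filter.atTop,
      ∃ q' : QCond p c, q'.a = insert β q.a ∧
        q'.f = (if β ∈ q.a then q.f else Function.update q.f β k) ∧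
        q'.wdom = q.wdom ∧ q'.w = q.w ∧ QLe q' q ∧ β ∈ q'.a) := by
  refine ⟨fun q => ?_, fun q => q.eventually_exists_insert β⟩
  obtain ⟨-, q', -, -, -, -, hle, hmem⟩ := (q.eventually_exists_insert β).exists
  exact ⟨q', hle, hmem⟩
end
end
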